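/- (Star-shaped determinant formula.) Let b be a real number, let k ≥ 1, and for each i = 1, …, k let B_i be a square real matrix of size n_i ≥ 1 (indexed by {1,…,n_i}). Let M be the square matrix of size 1 + n_1 + ⋯ + n_k, indexed by a central index * together with the disjoint union of the index sets of the B_i, defined by: M(*,*) = b; M(*, (i,1)) = M((i,1), *) = −1 for each i; M((i,s),(i,t)) = (B_i)_{s,t}; and all other entries 0 (in particular, entries between different blocks, and between * and non-first indices of a block, vanish). Then det M = b · ∏_{i=1}^{k} det B_i − ∑_{i=1}^{k} ( det B_i⁰ · ∏_{j ≠ i} det B_j ), where B_i⁰ is the matrix obtained from B_i by deleting its first row and first column (with the convention that the determinant of the empty 0×0 matrix is 1). -/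

import Mathlib

/-!
Write the star matrix as the bordered matrix `[[b, uᵀ], [u, D]]` with `D` the block diagonal
matrix of the arms and `u` the vector with entry `-1` at the first vertex of every arm.
Over any commutative ring, `det [[a, rᵀ], [c, D]] = a * det D - rᵀ (adj D) c`, and the adjugate
of a block diagonal matrix is block diagonal with blocks `(∏_{j ≠ i} det B_j) • adj B_i`.
Hence `uᵀ (adj D) u = ∑ᵢ (∏_{j ≠ i} det B_j) (adj B_i)₀₀`, where `(adj B_i)₀₀ = det B_i⁰`.

Both matrix identities are immediate when `det D` is a non-zero-divisor. The general case
follows by replacing `D` with `X • 1 + D` over `R[X]`, whose determinant is monic, and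
evaluating at `X = 0`.
-/

/-- The star-shaped matrix with central entry `b`, blocks `B i`, and `-1`
connecting the central index to the first index of each block. -/
def starMatrix {k : ℕ} (b : ℝ) (n : Fin k → ℕ)
    (B : ∀ i, Matrix (Fin (n i)) (Fin (n i)) ℝ) :
    Matrix (Unit ⊕ Σ i : Fin k, Fin (n i)) (Unit ⊕ Σ i : Fin k, Fin (n i)) ℝ :=
  Matrix.of fun p q =>
    match p, q with
    | Sum.inl _, Sum.inl _ => b
    | Sum.inl _, Sum.inr ⟨_, s⟩ => if (s : ℕ) = 0 then -1 else 0
    | Sum.inr ⟨_, s⟩, Sum.inl _ => if (s : ℕ) = 0 then -1 else 0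
    | Sum.inr ⟨i, s⟩, Sum.inr ⟨j, t⟩ =>
        if h : i = j then B i s (Fin.cast (congrArg n h.symm) t) else 0

/-- The block `B i` with its first row and first column deleted. -/
def deleteFirst {m : ℕ} (B : Matrix (Fin m) (Fin m) ℝ) :
    Matrix (Fin (m - 1)) (Fin (m - 1)) ℝ :=
  B.submatrix (fun s => ⟨(s : ℕ) + 1, by omega⟩) (fun s => ⟨(s : ℕ) + 1, by omega⟩)

open Matrix Polynomial

namespace Matrix

section Bordered

variable {R : Type*} [CommRing R] {κ : Type*} [Fintype κ] [DecidableEq κ]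

/-- `charmatrix (-M) = X • 1 + M` has the monic determinant `charpoly (-M)`. -/
theorem map_eval_zero_charmatrix_neg (M : Matrix κ κ R) :
    (charmatrix (-M)).map (eval 0) = M := by
  ext i j
  by_cases h : i = j
  · subst h; simp
  · simp [charmatrix_apply, diagonal_apply_ne _ h]

theorem mulVec_adjugate_mulVec (D : Matrix κ κ R) (c : κ → R) :
    D *ᵥ (D.adjugate *ᵥ c) = D.det • c := by
  rw [mulVec_mulVec, mul_adjugate, smul_mulVec, one_mulVec]

theorem det_fromBlocks_replicateRow_replicateCol_mul_det (a : R) (r c : κ → R)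
    (D : Matrix κ κ R) :
    (fromBlocks (of fun _ _ : Unit => a) (replicateRow Unit r) (replicateCol Unit c) D).det *
      D.det = (a * D.det - r ⬝ᵥ (D.adjugate *ᵥ c)) * D.det := by
  set M := fromBlocks (of fun _ _ : Unit => a) (replicateRow Unit r) (replicateCol Unit c) D
  set E : Matrix (Unit ⊕ κ) (Unit ⊕ κ) R :=
    fromBlocks (of fun _ _ => D.det) 0 (replicateCol Unit (-(D.adjugate *ᵥ c))) 1
  have hE : E.det = D.det := by simp [E, det_unique]
  have hME : M * E = fromBlocks (of fun _ _ => a * D.det - r ⬝ᵥ (D.adjugate *ᵥ c))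
      (replicateRow Unit r) 0 D := by
    simp only [M, E, fromBlocks_multiply, fromBlocks_inj]
    refine ⟨?_, by simp, ?_, by simp⟩
    · ext; simp [Matrix.mul_apply, dotProduct, sub_eq_add_neg]
    · ext i j
      have h := congrFun (mulVec_adjugate_mulVec D c) i
      simp only [mulVec, dotProduct, Pi.smul_apply, smul_eq_mul, mul_comm (D.adjugate _ _)] at h
      simp [Matrix.mul_apply, mulVec, dotProduct, h, mul_comm]
  calc M.det * D.det = (M * E).det := by rw [det_mul, hE]
    _ = _ := by rw [hME, det_fromBlocks_zero₂₁, det_unique]; rfl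

theorem det_fromBlocks_replicateRow_replicateCol (a : R) (r c : κ → R) (D : Matrix κ κ R) :
    (fromBlocks (of fun _ _ : Unit => a) (replicateRow Unit r) (replicateCol Unit c) D).det =
      a * D.det - r ⬝ᵥ (D.adjugate *ᵥ c) := by
  have h := (charpoly_monic (-D)).isRegular.right
    (det_fromBlocks_replicateRow_replicateCol_mul_det (C a) (C ∘ r) (C ∘ c) (charmatrix (-D)))
  have hD : (evalRingHom 0).mapMatrix (charmatrix (-D)) = D := map_eval_zero_charmatrix_neg D
  have hM : (evalRingHom 0).mapMatrix (fromBlocks (of fun _ _ : Unit => C a)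
      (replicateRow Unit (C ∘ r)) (replicateCol Unit (C ∘ c)) (charmatrix (-D))) =
      fromBlocks (of fun _ _ : Unit => a) (replicateRow Unit r) (replicateCol Unit c) D := by
    ext (i | i) (j | j)
    all_goals simp only [RingHom.mapMatrix_apply, coe_evalRingHom, map_apply, fromBlocks_apply₁₁,
      fromBlocks_apply₁₂, fromBlocks_apply₂₁, fromBlocks_apply₂₂, of_apply, replicateRow_apply,
      replicateCol_apply, Function.comp_apply, eval_C]
    exact congrFun₂ hD i j
  have hv : evalRingHom 0 ∘ ((charmatrix (-D)).adjugate *ᵥ (C ∘ c)) = D.adjugate *ᵥ c := by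
    ext i
    rw [Function.comp_apply, RingHom.map_mulVec, ← RingHom.mapMatrix_apply,
      RingHom.map_adjugate, hD]
    congr
    ext; simp
  apply congrArg (evalRingHom (0 : R)) at h
  rw [RingHom.map_det, RingHom.map_sub, RingHom.map_mul, RingHom.map_det, hD,
    RingHom.map_dotProduct, hM, hv] at h
  simpa [Function.comp_def] using h

end Bordered

section BlockDiagonal

variable {ι : Type*} [DecidableEq ι] {m : ι → Type*}

theorem toSquareBlock_blockDiagonal' {α : Type*} [Zero α] (B : ∀ i, Matrix (m i) (m i) α)
    (k : ι) : (blockDiagonal' B).toSquareBlock Sigma.fst k =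
      (B k).submatrix (Equiv.sigmaSubtype k) (Equiv.sigmaSubtype k) := by
  ext ⟨⟨i, s⟩, hi⟩ ⟨⟨j, t⟩, hj⟩
  dsimp only at hi hj
  subst hi hj
  simp [toSquareBlock_def, Equiv.sigmaSubtype]

variable [Fintype ι] [∀ i, Fintype (m i)]

theorem dotProduct_blockDiagonal'_mulVec {α : Type*} [NonUnitalNonAssocSemiring α]
    (M : ∀ i, Matrix (m i) (m i) α) (v w : (Σ i, m i) → α) :
    v ⬝ᵥ (blockDiagonal' M *ᵥ w) =
      ∑ i, (fun s => v ⟨i, s⟩) ⬝ᵥ (M i *ᵥ fun s => w ⟨i, s⟩) := by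
  simp [dotProduct, mulVec, Fintype.sum_sigma, blockDiagonal'_apply]

variable [∀ i, DecidableEq (m i)] {R : Type*} [CommRing R]

theorem det_blockDiagonal' (B : ∀ i, Matrix (m i) (m i) R) :
    (blockDiagonal' B).det = ∏ i, (B i).det := by
  let _ : LinearOrder ι := LinearOrder.lift' _ (Fintype.equivFin ι).injective
  rw [(blockTriangular_blockDiagonal' B).det_fintype]
  simp [toSquareBlock_blockDiagonal', det_submatrix_equiv_self]

theorem adjugate_blockDiagonal'_of_isLeftRegular (B : ∀ i, Matrix (m i) (m i) R)
    (h : IsLeftRegular (blockDiagonal' B).det) :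
    (blockDiagonal' B).adjugate =
      blockDiagonal' fun i => (∏ j ∈ Finset.univ.erase i, (B j).det) • (B i).adjugate := by
  apply (isRegular_of_isLeftRegular_det h).left
  simp only [mul_adjugate, ← blockDiagonal'_mul, mul_smul_comm, smul_smul, det_blockDiagonal',
    Finset.prod_erase_mul _ _ (Finset.mem_univ _)]
  rw [← blockDiagonal'_one, ← blockDiagonal'_smul]
  rfl

theorem adjugate_blockDiagonal' (B : ∀ i, Matrix (m i) (m i) R) :
    (blockDiagonal' B).adjugate =
      blockDiagonal' fun i => (∏ j ∈ Finset.univ.erase i, (B j).det) • (B i).adjugate := by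
  set φ : R[X] →+* R := evalRingHom 0
  have hB (i : ι) : (charmatrix (-B i)).map φ = B i := map_eval_zero_charmatrix_neg _
  have hdet (i : ι) : φ (charmatrix (-B i)).det = (B i).det := by
    rw [RingHom.map_det, RingHom.mapMatrix_apply, hB]
  have hadj (i : ι) : (charmatrix (-B i)).adjugate.map φ = (B i).adjugate := by
    rw [← RingHom.mapMatrix_apply, RingHom.map_adjugate, RingHom.mapMatrix_apply, hB]
  have h := adjugate_blockDiagonal'_of_isLeftRegular (fun i => charmatrix (-B i)) (by
    rw [det_blockDiagonal']
    exact (monic_prod_of_monic _ _ fun i _ => charpoly_monic (-B i)).isRegular.left)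
  apply congrArg φ.mapMatrix at h
  rw [RingHom.map_adjugate] at h
  simpa only [RingHom.mapMatrix_apply, blockDiagonal'_map _ _ (map_zero φ),
    map_smul' _ _ _ (map_mul φ), map_prod, hB, hdet, hadj] using h

end BlockDiagonal

end Matrix

theorem adjugate_apply_zero_zero_eq_det_deleteFirst {m : ℕ} (hm : 1 ≤ m)
    (B : Matrix (Fin m) (Fin m) ℝ) :
    B.adjugate ⟨0, hm⟩ ⟨0, hm⟩ = (deleteFirst B).det := by
  obtain ⟨m, rfl⟩ : ∃ m', m = m' + 1 := ⟨m - 1, by omega⟩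
  rw [show (⟨0, hm⟩ : Fin (m + 1)) = 0 from rfl, adjugate_fin_succ_eq_det_submatrix]
  simp only [Fin.coe_ofNat_eq_mod, Nat.zero_mod, add_zero, pow_zero, one_mul,
    Fin.succAbove_zero]
  rfl

def starRow {k : ℕ} (n : Fin k → ℕ) : (Σ i : Fin k, Fin (n i)) → ℝ :=
  fun p => if (p.2 : ℕ) = 0 then -1 else 0

theorem starRow_block {k : ℕ} (n : Fin k → ℕ) (i : Fin k) (hi : 1 ≤ n i) :
    (fun s => starRow n ⟨i, s⟩) = -Pi.single ⟨0, hi⟩ 1 := by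
  ext s
  simp only [starRow, Pi.neg_apply, Pi.single_apply, Fin.ext_iff]
  split_ifs <;> norm_num

theorem starMatrix_eq_fromBlocks {k : ℕ} (b : ℝ) (n : Fin k → ℕ)
    (B : ∀ i, Matrix (Fin (n i)) (Fin (n i)) ℝ) :
    starMatrix b n B = fromBlocks (of fun _ _ => b) (replicateRow Unit (starRow n))
      (replicateCol Unit (starRow n)) (blockDiagonal' B) := by
  ext (_ | ⟨i, s⟩) (_ | ⟨j, t⟩)
  · rfl
  · rfl
  · rfl
  · by_cases h : i = j
    · subst h; simp [starMatrix]
    · simp [starMatrix, h, blockDiagonal'_apply_ne]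

theorem starMatrix_det_general (k : ℕ) (b : ℝ) (n : Fin k → ℕ)
    (hn : ∀ i, 1 ≤ n i) (B : ∀ i, Matrix (Fin (n i)) (Fin (n i)) ℝ) :
    (starMatrix b n B).det =
      b * ∏ i, (B i).det -
        ∑ i, (deleteFirst (B i)).det * ∏ j ∈ Finset.univ.erase i, (B j).det := by
  have hblock (i : Fin k) : (fun s => starRow n ⟨i, s⟩) ⬝ᵥ
      (((∏ j ∈ Finset.univ.erase i, (B j).det) • (B i).adjugate) *ᵥ
        fun s => starRow n ⟨i, s⟩) =
      (deleteFirst (B i)).det * ∏ j ∈ Finset.univ.erase i, (B j).det := by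
    rw [starRow_block n i (hn i), neg_dotProduct, mulVec_neg, dotProduct_neg, neg_neg,
      single_one_dotProduct, mulVec_single_one, col_apply, Matrix.smul_apply, smul_eq_mul,
      adjugate_apply_zero_zero_eq_det_deleteFirst, mul_comm]
  rw [starMatrix_eq_fromBlocks, det_fromBlocks_replicateRow_replicateCol, det_blockDiagonal',
    adjugate_blockDiagonal', dotProduct_blockDiagonal'_mulVec]
  simp only [hblock]

theorem starMatrix_det (k : ℕ) (hk : 1 ≤ k) (b : ℝ) (n : Fin k → ℕ)
    (hn : ∀ i, 1 ≤ n i) (B : ∀ i, Matrix (Fin (n i)) (Fin (n i)) ℝ) :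
    (starMatrix b n B).det =
      b * ∏ i, (B i).det -
        ∑ i, (deleteFirst (B i)).det * ∏ j ∈ Finset.univ.erase i, (B j).det :=
  starMatrix_det_general k b n hn B
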